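/- Let T : A → A be a weak-local derivation on a C*-algebra A and let a ∈ A be self-adjoint with range projection r(a) ∈ A**. Then (1 − r(a)) T(b) (1 − r(a)) = 0 for every element b of the C*-subalgebra of A generated by a. -/

import Mathlib

open scoped ComplexOrder

variable {A : Type*} [NormedRing A] [StarRing A] [CStarRing A] [CompleteSpace A]
  [NormedAlgebra ℂ A] [StarModule ℂ A]

/-- A state on a C*-algebra: a norm-one positive continuous linear functional. -/
def IsState (φ : A →L[ℂ] ℂ) : Prop :=
  ‖φ‖ = 1 ∧ ∀ a : A, 0 ≤ φ (star a * a)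

/-- A derivation on a C*-algebra: a linear map satisfying the Leibniz rule. -/
def IsDerivation (D : A → A) : Prop :=
  IsLinearMap ℂ D ∧ ∀ a b : A, D (a * b) = D a * b + a * D b

/-- A weak-local derivation: a linear map that agrees with some derivation at each point,
up to each state. -/
def IsWeakLocalDerivation (T : A → A) : Prop :=
  IsLinearMap ℂ T ∧ ∀ (a : A) (φ : A →L[ℂ] ℂ), IsState φ →
    ∃ D : A → A, IsDerivation D ∧ φ (T a) = φ (D a)

variable {H : Type*} [NormedAddCommGroup H] [InnerProductSpace ℂ H] [CompleteSpace H]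

open scoped InnerProductSpace

/-- A normal state on `B(H)` in density-matrix form; the normal states of a von Neumann
algebra `M ⊆ B(H)` are exactly the restrictions to `M` of such functionals. -/
def IsNormalState (φ : (H →L[ℂ] H) → ℂ) : Prop :=
  ∃ ξ : ℕ → H, (∑' n, ‖ξ n‖ ^ 2) = 1 ∧ ∀ x : H →L[ℂ] H, φ x = ∑' n, ⟪ξ n, x (ξ n)⟫_ℂ

/-- `M` is the von Neumann algebra generated by the image of `j`, i.e. the double commutant
of `j(A)`.  Together with an isometric `*`-representation `j`, this realizes the enveloping
von Neumann algebra `A**` of `A`. -/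
def GeneratedBy (M : VonNeumannAlgebra H) (j : A →⋆ₐ[ℂ] (H →L[ℂ] H)) : Prop :=
  ∀ x : H →L[ℂ] H, x ∈ M ↔
    ∀ y : H →L[ℂ] H, (∀ b : A, y * j b = j b * y) → x * y = y * x

/-! Represent `A` by `j` and take `η` in the range of `1 - r`, so that `j a η = 0`. Writing
`b = f(a)` and `μ = f(0)`, the factorization `f - μ = g h` with `h = |f - μ|^{1/2}` and
`g = (f - μ) / |f - μ|^{1/2}` gives `b = c d + μ` where `c*` and `d` lie in every closed left ideal
containing `a`, hence `j(c*) η = j(d) η = 0`. The vector functional `ω_η` is a multiple of a state,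
so `ω_η(T b) = ω_η(D b)` for a derivation `D`, and by the Leibniz rule
`ω_η(D b) = ⟪j(c*) η, j(D d) η⟫ + ⟪η, j(D c) j(d) η⟫ = 0`; the factorization is what makes this
work without any continuity of `D`. Thus `(1 - r) T(b) (1 - r)` has vanishing quadratic form. -/

lemma norm_div_sqrt_norm (z : ℂ) : ‖z / (√‖z‖ : ℂ)‖ = √‖z‖ := by
  rw [norm_div, Complex.norm_real, Real.norm_of_nonneg (Real.sqrt_nonneg _), Real.div_sqrt]

lemma continuous_div_sqrt_norm : Continuous fun z : ℂ => z / (√‖z‖ : ℂ) := by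
  rw [continuous_iff_continuousAt]
  intro z
  rcases eq_or_ne z 0 with rfl | hz
  · rw [ContinuousAt, zero_div, tendsto_zero_iff_norm_tendsto_zero]
    simp only [norm_div_sqrt_norm]
    simpa using (continuous_norm (E := ℂ)).sqrt.tendsto 0
  · exact continuousAt_id.div (by fun_prop) (by simpa using hz)

namespace ContinuousMap

variable {X : Type*} [TopologicalSpace X]

lemma exists_eq_mul_of_eq_zero (f : C(X, ℂ)) :
    ∃ g h : C(X, ℂ), f = g * h ∧ ∀ x, f x = 0 → g x = 0 ∧ h x = 0 := by
  refine ⟨⟨fun x => f x / (√‖f x‖ : ℂ), continuous_div_sqrt_norm.comp f.continuous⟩,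
    ⟨fun x => (√‖f x‖ : ℂ), by fun_prop⟩, ?_, fun x hx => by simp [hx]⟩
  ext x
  by_cases hx : f x = 0 <;> simp [hx]

end ContinuousMap

section Ideal

variable {A : Type*} [Ring A] [StarRing A] [Algebra ℂ A] [TopologicalSpace A]
  {p : A → Prop} [ContinuousFunctionalCalculus ℂ A p]

lemma cfcHom_mem_of_isClosed {a : A} (ha : p a) {I : Ideal A} (hI : IsClosed (I : Set A))
    (haI : a ∈ I) {u : C(spectrum ℂ a, ℂ)} (hu : ∀ z : spectrum ℂ a, (z : ℂ) = 0 → u z = 0) :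
    cfcHom ha u ∈ I := by
  have : CompactSpace (spectrum ℂ a) :=
    isCompact_iff_compactSpace.mp (ContinuousFunctionalCalculus.isCompact_spectrum a)
  let V : Ideal C(spectrum ℂ a, ℂ) := I.comap (cfcHom ha)
  have hV : IsClosed (V : Set C(spectrum ℂ a, ℂ)) := hI.preimage (cfcHom_continuous ha)
  have hid : (ContinuousMap.id ℂ).restrict (spectrum ℂ a) ∈ V := by
    simpa [V, cfcHom_id ha] using haI
  change u ∈ V
  rw [← ContinuousMap.idealOfSet_ofIdeal_isClosed hV, ContinuousMap.mem_idealOfSet]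
  intro z hz
  exact hu z (ContinuousMap.notMem_setOfIdeal.mp hz hid)

end Ideal

section Factorization

variable {A : Type*} [CStarAlgebra A]

lemma exists_eq_mul_add_algebraMap_of_mem_elemental {a : A} (ha : IsStarNormal a) {b : A}
    (hb : b ∈ StarAlgebra.elemental ℂ a) :
    ∃ (c d : A) (μ : ℂ), b = c * d + algebraMap ℂ A μ ∧
      ∀ I : Ideal A, IsClosed (I : Set A) → a ∈ I → star c ∈ I ∧ d ∈ I := by
  obtain ⟨f, rfl⟩ : ∃ f, cfcHom ha (R := ℂ) f = b := by rwa [← range_cfcHom ℂ ha] at hb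
  obtain ⟨μ, hμ⟩ : ∃ μ : ℂ, ∀ z : spectrum ℂ a, (z : ℂ) = 0 → f z = μ := by
    by_cases h0 : ∃ z : spectrum ℂ a, (z : ℂ) = 0
    · obtain ⟨z₀, hz₀⟩ := h0
      exact ⟨f z₀, fun z hz => congrArg f (Subtype.ext (hz.trans hz₀.symm))⟩
    · exact ⟨0, fun z hz => absurd ⟨z, hz⟩ h0⟩
  obtain ⟨g, h, hgh, hzero⟩ := (f - algebraMap ℂ _ μ).exists_eq_mul_of_eq_zero
  refine ⟨cfcHom ha g, cfcHom ha h, μ, ?_, fun I hI haI => ⟨?_, ?_⟩⟩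
  · rw [← map_mul, ← hgh, ← AlgHomClass.commutes (cfcHom ha), ← map_add, sub_add_cancel]
  · rw [← map_star]
    refine cfcHom_mem_of_isClosed ha hI haI fun z hz => ?_
    simp [(hzero z (by simp [hμ z hz])).1]
  · exact cfcHom_mem_of_isClosed ha hI haI fun z hz => (hzero z (by simp [hμ z hz])).2

end Factorization

section Derivation

variable {A : Type*} [NormedRing A] [NormedAlgebra ℂ A]

lemma IsDerivation.map_algebraMap {D : A → A} (hD : IsDerivation D) (μ : ℂ) :
    D (algebraMap ℂ A μ) = 0 := by
  have h1 : D 1 = 0 := by simpa using hD.2 1 1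
  rw [Algebra.algebraMap_eq_smul_one, hD.1.map_smul, h1, smul_zero]

end Derivation

namespace IsWeakLocalDerivation

variable {A : Type*} [NormedRing A] [StarRing A] [NormedAlgebra ℂ A] {T : A → A}

lemma exists_isDerivation_of_nonneg (hT : IsWeakLocalDerivation T) (x : A) {φ : A →L[ℂ] ℂ}
    (hφ : ∀ y : A, 0 ≤ φ (star y * y)) : ∃ D : A → A, IsDerivation D ∧ φ (T x) = φ (D x) := by
  rcases eq_or_ne φ 0 with rfl | hφ0
  · exact ⟨0, ⟨(0 : A →ₗ[ℂ] A).isLinear, fun _ _ => by simp⟩, rfl⟩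
  have hc : ((‖φ‖⁻¹ : ℝ) : ℂ) ≠ 0 := by simpa using hφ0
  have hstate : IsState (((‖φ‖⁻¹ : ℝ) : ℂ) • φ) := by
    refine ⟨?_, fun y => ?_⟩
    · rw [norm_smul, Complex.norm_real, norm_inv, norm_norm, inv_mul_cancel₀ (by simpa using hφ0)]
    · simpa using mul_nonneg (Complex.zero_le_real.mpr (inv_nonneg.mpr (norm_nonneg φ))) (hφ y)
  obtain ⟨D, hD, hTD⟩ := hT.2 x _ hstate
  exact ⟨D, hD, mul_left_cancel₀ hc hTD⟩

lemma apply_eq_zero_of_eq_mul_add_algebraMap (hT : IsWeakLocalDerivation T) {φ : A →L[ℂ] ℂ}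
    (hφ : ∀ y : A, 0 ≤ φ (star y * y)) {b c d : A} {μ : ℂ} (hb : b = c * d + algebraMap ℂ A μ)
    (hc : ∀ y : A, φ (c * y) = 0) (hd : ∀ y : A, φ (y * d) = 0) : φ (T b) = 0 := by
  obtain ⟨D, hD, hTD⟩ := hT.exists_isDerivation_of_nonneg b hφ
  rw [hTD, hb, hD.1.map_add, hD.map_algebraMap, add_zero, hD.2, map_add, hc, hd, add_zero]

end IsWeakLocalDerivation

open scoped CStarAlgebra

section VectorFunctional

variable {A : Type*} [CStarAlgebra A]

noncomputable def vectorFunctional (j : A →⋆ₐ[ℂ] (H →L[ℂ] H)) (η : H) : A →L[ℂ] ℂ :=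
  (innerSL ℂ η).comp ((ContinuousLinearMap.apply ℂ H η).comp
    ⟨j.toAlgHom.toLinearMap, map_continuous j⟩)

variable (j : A →⋆ₐ[ℂ] (H →L[ℂ] H)) (η : H)

lemma vectorFunctional_apply (x : A) : vectorFunctional j η x = ⟪η, j x η⟫_ℂ := rfl

lemma vectorFunctional_star_mul_self_nonneg (x : A) :
    0 ≤ vectorFunctional j η (star x * x) := by
  rw [vectorFunctional_apply, map_mul, map_star, ContinuousLinearMap.star_eq_adjoint,
    mul_apply_eq_comp, ContinuousLinearMap.adjoint_inner_right, inner_self_eq_norm_sq_to_K]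
  exact pow_nonneg (RCLike.ofReal_nonneg.mpr (norm_nonneg _)) 2

end VectorFunctional

lemma ContinuousLinearMap.mul_mul_eq_zero_of_inner_eq_zero {P S : H →L[ℂ] H}
    (hP : IsSelfAdjoint P) (h : ∀ ξ, ⟪P ξ, S (P ξ)⟫_ℂ = 0) : P * S * P = 0 := by
  have hlin : ((P * S * P : H →L[ℂ] H) : H →ₗ[ℂ] H) = 0 := by
    refine (inner_map_self_eq_zero _).mp fun ξ => ?_
    change ⟪P (S (P ξ)), ξ⟫_ℂ = 0
    rw [← ContinuousLinearMap.adjoint_inner_right, hP.adjoint_eq]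
    exact inner_eq_zero_symm.mp (h ξ)
  ext ξ
  exact LinearMap.congr_fun hlin ξ

section Representation

variable {A : Type*} [CStarAlgebra A] (j : A →⋆ₐ[ℂ] (H →L[ℂ] H)) (η : H)

def annihilatingIdeal : Ideal A where
  carrier := {x | j x η = 0}
  add_mem' hx hy := by simp_all
  zero_mem' := by simp
  smul_mem' c x hx := by simp_all [mul_apply_eq_comp]

lemma isClosed_annihilatingIdeal : IsClosed (annihilatingIdeal j η : Set A) :=
  isClosed_eq ((ContinuousLinearMap.apply ℂ H η).continuous.comp (map_continuous j))
    continuous_const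

variable {j η}

lemma IsWeakLocalDerivation.inner_apply_eq_zero_of_mem_elemental {T : A → A}
    (hT : IsWeakLocalDerivation T) {a : A} (ha : IsStarNormal a) (hη : j a η = 0) {b : A}
    (hb : b ∈ StarAlgebra.elemental ℂ a) : ⟪η, j (T b) η⟫_ℂ = 0 := by
  obtain ⟨c, d, μ, hcd, hI⟩ := exists_eq_mul_add_algebraMap_of_mem_elemental ha hb
  obtain ⟨hc, hd⟩ := hI _ (isClosed_annihilatingIdeal j η) hη
  refine hT.apply_eq_zero_of_eq_mul_add_algebraMap (vectorFunctional_star_mul_self_nonneg j η)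
    hcd (fun y => ?_) (fun y => ?_)
  · rw [vectorFunctional_apply, map_mul, mul_apply_eq_comp,
      ← ContinuousLinearMap.adjoint_inner_left, ← ContinuousLinearMap.star_eq_adjoint, ← map_star,
      show j (star c) η = 0 from hc, inner_zero_left]
  · rw [vectorFunctional_apply, map_mul, mul_apply_eq_comp, show j d η = 0 from hd, map_zero,
      inner_zero_right]

end Representation

theorem weakLocalDerivation_range_proj_bidual_general (T : A → A) (hT : IsWeakLocalDerivation T)
    (j : A →⋆ₐ[ℂ] (H →L[ℂ] H)) (a : A) (ha : IsSelfAdjoint a)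
    (r : H →L[ℂ] H) (hr1 : star r = r)
    (har : j a * r = j a) :
    ∀ b ∈ StarAlgebra.elemental ℂ a, (1 - r) * j (T b) * (1 - r) = 0 := by
  let _ : CStarAlgebra A :=
    { ‹NormedRing A›, ‹StarRing A›, ‹CStarRing A›, ‹CompleteSpace A›,
      ‹NormedAlgebra ℂ A›, ‹StarModule ℂ A› with }
  intro b hb
  have hP : IsSelfAdjoint (1 - r) := (IsSelfAdjoint.one _).sub hr1
  have hker : ∀ ξ, j a ((1 - r) ξ) = 0 := fun ξ => by
    rw [← mul_apply_eq_comp, mul_sub, mul_one, har, sub_self, zero_apply]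
  exact ContinuousLinearMap.mul_mul_eq_zero_of_inner_eq_zero hP fun ξ =>
    hT.inner_apply_eq_zero_of_mem_elemental ha.isStarNormal (hker ξ) hb

/-- For a weak-local derivation `T` on `A` and a self-adjoint `a ∈ A` with range projection
`r(a)` in `A**`, one has `(1 - r(a)) T(b) (1 - r(a)) = 0` for every `b` in the C*-subalgebra
of `A` generated by `a`. -/
theorem weakLocalDerivation_range_proj_bidual (T : A → A) (hT : IsWeakLocalDerivation T)
    (j : A →⋆ₐ[ℂ] (H →L[ℂ] H)) (hj : Isometry j) (M : VonNeumannAlgebra H)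
    (hgen : GeneratedBy M j) (a : A) (ha : IsSelfAdjoint a)
    (r : H →L[ℂ] H) (hrM : r ∈ M) (hr1 : star r = r) (hr2 : r * r = r)
    (har : j a * r = j a) (hra : r * j a = j a)
    (hmin : ∀ q : H →L[ℂ] H, q ∈ M → star q = q → q * q = q →
      j a * q = j a → q * j a = j a → r * q = r) :
    ∀ b ∈ StarAlgebra.elemental ℂ a, (1 - r) * j (T b) * (1 - r) = 0 :=
  weakLocalDerivation_range_proj_bidual_general T hT j a ha r hr1 har
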